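/- If Γ is an uncountable set and 1 < r < p < ∞, then ℓ^{r,∞}(Γ) (counting-measure weak ℓ^r) does not embed isomorphically into ℓ^{p,∞}(Γ,w_1) for any weight w_1 on Γ; hence ℓ^{p,∞}(Γ,w_1) and ℓ^{r,∞}(Γ,w_2) are never isomorphic when p ≠ r. -/

import Mathlib

/-!
Let `fᵧ = T eᵧ` be the images of the unit vectors over an uncountable set `A` on which `w₂` is
comparable to a constant (pigeonhole over dyadic bands gives such an `A` for any weight). For
finite `F ⊆ A` and coefficients `|sᵧ| ≤ 1`, the vector `∑_{γ ∈ F} sᵧ eᵧ` has weak `ℓ^r` norm of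
order `|F|^{1/r}`, so `‖∑ sᵧ fᵧ‖ ≲ |F|^{1/r}` and `‖∑ fᵧ‖ ≳ |F|^{1/r}`.

Choosing the signs `sᵧ` to align the values `fᵧ(t)` shows that for each `κ > 0` only finitely many
`|fᵧ(t)|` exceed `κ`; otherwise the norm would grow like `|F|`. So every point lies in the support
of only countably many `fᵧ`, while each `fᵧ` has countable support. A greedy choice then yields
arbitrarily large `F` with pairwise disjoint supports, and for such sums `ℓ^{p,∞}(w₁)` satisfies the
upper estimate `‖∑ fᵧ‖ ≤ M |F|^{1/p}`, which contradicts `|F|^{1/r} ≲ ‖∑ fᵧ‖` since `1/p < 1/r`.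
-/

open ENNReal

/-- The weak `ℓ^p` quasi-norm on a weighted set. -/
noncomputable def weakNorm {Γ : Type*} (p : ℝ) (w : Γ → ℝ) (x : Γ → ℝ) : ℝ≥0∞ :=
  ⨆ (c : ℝ) (_ : 0 < c),
    ENNReal.ofReal c * (∑' γ : {γ : Γ // c < |x γ|}, ENNReal.ofReal (w γ.1)) ^ ((1 : ℝ)/p)

open Finset Function

theorem mul_rpow_one_div_rpow (a b : ℝ≥0∞) {p : ℝ} (hp : 0 < p) :
    (a * b ^ (1 / p)) ^ p = a ^ p * b := by
  rw [ENNReal.mul_rpow_of_nonneg _ _ hp.le, ← ENNReal.rpow_mul, one_div_mul_cancel hp.ne',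
    ENNReal.rpow_one]

theorem exists_nat_mul_rpow_lt {K M : ℝ≥0∞} {u v : ℝ} (hK : K ≠ 0) (hM : M ≠ ⊤) (hvu : v < u) :
    ∃ N : ℕ, 0 < N ∧ M * (N : ℝ≥0∞) ^ v < K * (N : ℝ≥0∞) ^ u := by
  have hs : 0 < u - v := sub_pos.2 hvu
  obtain ⟨N, hN⟩ := ENNReal.exists_nat_gt
    (ENNReal.rpow_ne_top_of_nonneg (inv_pos.2 hs).le (ENNReal.div_ne_top hM hK))
  have hN0 : (N : ℝ≥0∞) ≠ 0 := (pos_of_gt hN).ne'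
  refine ⟨N, by exact_mod_cast pos_of_gt hN, ?_⟩
  have hMK : M / K < (N : ℝ≥0∞) ^ (u - v) := by
    simpa [ENNReal.rpow_inv_rpow hs.ne'] using ENNReal.rpow_lt_rpow hN hs
  rw [ENNReal.div_lt_iff (Or.inl hK) (Or.inr hM)] at hMK
  calc M * (N : ℝ≥0∞) ^ v < (N : ℝ≥0∞) ^ (u - v) * K * (N : ℝ≥0∞) ^ v :=
        ENNReal.mul_lt_mul_left (ENNReal.rpow_pos (pos_iff_ne_zero.2 hN0) (natCast_ne_top N)).ne'
          (ENNReal.rpow_ne_top_of_ne_zero hN0 (natCast_ne_top N)) hMK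
    _ = K * (N : ℝ≥0∞) ^ u := by
        rw [mul_comm _ K, mul_assoc, ← ENNReal.rpow_add _ _ hN0 (natCast_ne_top N), sub_add_cancel]

theorem exists_finset_card_eq_pairwise_disjoint {ι α : Type*} {A : Set ι} (hA : ¬ A.Countable)
    {S : ι → Set α} (hS : ∀ i ∈ A, (S i).Countable) (hfib : ∀ a, {i ∈ A | a ∈ S i}.Countable)
    (N : ℕ) : ∃ F : Finset ι, ↑F ⊆ A ∧ #F = N ∧ (F : Set ι).Pairwise (Disjoint on S) := by
  classical
  induction N with
  | zero => exact ⟨∅, by simp, rfl, by simp⟩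
  | succ N ih =>
    obtain ⟨F, hFA, rfl, hF⟩ := ih
    have hbad : (↑F ∪ ⋃ j ∈ F, ⋃ a ∈ S j, {i ∈ A | a ∈ S i}).Countable :=
      F.countable_toSet.union <| F.countable_toSet.biUnion fun j hj =>
        (hS j (hFA hj)).biUnion fun a _ => hfib a
    obtain ⟨i, hiA, hi⟩ := Set.not_subset.1 fun h => hA (hbad.mono h)
    rw [Set.mem_union, not_or] at hi
    refine ⟨insert i F, ?_, card_insert_of_notMem hi.1, ?_⟩
    · rw [coe_insert]
      exact Set.insert_subset hiA hFA
    · have hdisj : ∀ j ∈ F, Disjoint (S i) (S j) := fun j hj =>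
        Set.disjoint_left.2 fun a hai haj =>
          hi.2 (Set.mem_biUnion hj (Set.mem_biUnion haj ⟨hiA, hai⟩))
      rw [coe_insert, Set.pairwise_insert]
      exact ⟨hF, fun j hj _ => ⟨hdisj j hj, (hdisj j hj).symm⟩⟩

theorem countable_setOf_ne_zero_of_forall_countable {α : Type*} {S : Set α} {g : α → ℝ}
    (h : ∀ κ : ℝ, 0 < κ → {a ∈ S | κ < |g a|}.Countable) : {a ∈ S | g a ≠ 0}.Countable := by
  refine (Set.countable_iUnion fun n : ℕ => h (1 / (n + 1)) Nat.one_div_pos_of_nat).mono ?_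
  rintro a ⟨haS, ha⟩
  obtain ⟨n, hn⟩ := exists_nat_one_div_lt (abs_pos.2 ha)
  exact Set.mem_iUnion.2 ⟨n, haS, hn⟩

theorem LinearMap.apply_indicator_eq_sum_smul {Γ R M : Type*} [CommSemiring R] [AddCommMonoid M]
    [Module R M] [DecidableEq Γ] (T : (Γ → R) →ₗ[R] M) (F : Finset Γ) (s : Γ → R) :
    T ((F : Set Γ).indicator s) = ∑ γ ∈ F, s γ • T (Pi.single γ 1) := by
  have hsum : (F : Set Γ).indicator s = ∑ γ ∈ F, s γ • Pi.single γ (1 : R) := by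
    ext t
    simp [Finset.sum_apply, Pi.single_apply, Set.indicator_apply]
  simp [hsum, map_sum]

theorem sum_apply_eq_of_pairwise_disjoint {ι Γ M : Type*} [AddCommMonoid M] {F : Finset ι}
    {f : ι → Γ → M}
    (hF : (F : Set ι).Pairwise (Disjoint on fun i => support (f i))) {i : ι} (hi : i ∈ F)
    {γ : Γ} (hγ : f i γ ≠ 0) : (∑ j ∈ F, f j) γ = f i γ := by
  rw [Finset.sum_apply]
  refine Finset.sum_eq_single_of_mem i hi fun j hj hji => ?_
  by_contra h
  exact Set.disjoint_left.1 (hF hj hi hji) h hγ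

section WeakNorm

variable {Γ : Type*} {p : ℝ} {w : Γ → ℝ}

noncomputable def levelWeight (w x : Γ → ℝ) (c : ℝ) : ℝ≥0∞ :=
  ∑' γ : {γ | c < |x γ|}, ENNReal.ofReal (w γ)

theorem weakNorm_le_iff {x : Γ → ℝ} {M : ℝ≥0∞} :
    weakNorm p w x ≤ M ↔ ∀ c : ℝ, 0 < c → ENNReal.ofReal c * levelWeight w x c ^ (1 / p) ≤ M :=
  iSup₂_le_iff

theorem ofReal_mul_levelWeight_rpow_le_weakNorm (x : Γ → ℝ) {c : ℝ} (hc : 0 < c) :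
    ENNReal.ofReal c * levelWeight w x c ^ (1 / p) ≤ weakNorm p w x :=
  weakNorm_le_iff.1 le_rfl c hc

theorem ofReal_mul_rpow_le_weakNorm (hp : 0 < p) {x : Γ → ℝ} {c : ℝ} {t : Γ} (hc : 0 < c)
    (hct : c < |x t|) : ENNReal.ofReal c * ENNReal.ofReal (w t) ^ (1 / p) ≤ weakNorm p w x :=
  le_trans (by gcongr; exact ENNReal.le_tsum (⟨t, hct⟩ : {γ : Γ // c < |x γ|}))
    (ofReal_mul_levelWeight_rpow_le_weakNorm x hc)

theorem levelWeight_ne_top (hp : 0 < p) {x : Γ → ℝ} (hx : weakNorm p w x ≠ ⊤) {c : ℝ}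
    (hc : 0 < c) : levelWeight w x c ≠ ⊤ := by
  intro htop
  have := ofReal_mul_levelWeight_rpow_le_weakNorm (p := p) (w := w) x hc
  rw [htop, ENNReal.top_rpow_of_pos (one_div_pos.2 hp),
    ENNReal.mul_top (ENNReal.ofReal_pos.2 hc).ne'] at this
  exact hx (top_le_iff.1 this)

theorem countable_setOf_lt_abs_of_levelWeight_ne_top (hw : ∀ γ, 0 < w γ) {x : Γ → ℝ} {c : ℝ}
    (h : levelWeight w x c ≠ ⊤) : {γ | c < |x γ|}.Countable := by
  have hsupp := Summable.countable_support_ennreal h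
  rw [support_eq_univ fun γ : {γ | c < |x γ|} => (ENNReal.ofReal_pos.2 (hw γ.1)).ne',
    Set.countable_univ_iff] at hsupp
  exact Set.countable_coe_iff.1 hsupp

theorem countable_support_of_weakNorm_ne_top (hp : 0 < p) (hw : ∀ γ, 0 < w γ) {x : Γ → ℝ}
    (hx : weakNorm p w x ≠ ⊤) : (support x).Countable := by
  refine (countable_setOf_ne_zero_of_forall_countable (S := Set.univ) (g := x) fun κ hκ => ?_).mono
    fun γ hγ => Set.mem_sep trivial hγ
  exact (countable_setOf_lt_abs_of_levelWeight_ne_top hw (levelWeight_ne_top hp hx hκ)).mono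
    fun γ hγ => hγ.2

theorem weakNorm_sum_le_of_pairwise_disjoint {ι : Type*} (hp : 0 < p) {F : Finset ι}
    {f : ι → Γ → ℝ} (hF : (F : Set ι).Pairwise (Disjoint on fun i => support (f i)))
    {M : ℝ≥0∞} (hM : ∀ i ∈ F, weakNorm p w (f i) ≤ M) :
    weakNorm p w (∑ i ∈ F, f i) ≤ M * (#F : ℝ≥0∞) ^ (1 / p) := by
  refine weakNorm_le_iff.2 fun c hc => ?_
  have hlevel : {γ | c < |(∑ i ∈ F, f i) γ|} ⊆ ⋃ i ∈ F, {γ | c < |f i γ|} := by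
    intro γ hγ
    obtain ⟨i, hi, hiγ⟩ := Finset.exists_ne_zero_of_sum_ne_zero (s := F) (f := fun i => f i γ)
      (by rw [← Finset.sum_apply]; exact abs_pos.1 (hc.trans hγ))
    rw [Set.mem_ofPred_eq, sum_apply_eq_of_pairwise_disjoint hF hi hiγ] at hγ
    exact Set.mem_biUnion hi hγ
  have hsum : levelWeight w (∑ i ∈ F, f i) c ≤ ∑ i ∈ F, levelWeight w (f i) c :=
    (ENNReal.tsum_mono_subtype (fun γ => ENNReal.ofReal (w γ)) hlevel).trans
      (ENNReal.tsum_biUnion_le (fun γ => ENNReal.ofReal (w γ)) F fun i => {γ | c < |f i γ|})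
  have hterm : ∀ i ∈ F, ENNReal.ofReal c ^ p * levelWeight w (f i) c ≤ M ^ p := fun i hi => by
    rw [← mul_rpow_one_div_rpow _ _ hp]
    exact ENNReal.rpow_le_rpow ((ofReal_mul_levelWeight_rpow_le_weakNorm _ hc).trans (hM i hi))
      hp.le
  rw [← ENNReal.rpow_le_rpow_iff hp, mul_rpow_one_div_rpow _ _ hp, mul_rpow_one_div_rpow _ _ hp]
  calc ENNReal.ofReal c ^ p * levelWeight w (∑ i ∈ F, f i) c
      ≤ ∑ i ∈ F, ENNReal.ofReal c ^ p * levelWeight w (f i) c := by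
        rw [← Finset.mul_sum]; gcongr
    _ ≤ #F * M ^ p := by simpa using Finset.sum_le_card_nsmul F _ _ hterm
    _ = M ^ p * #F := mul_comm _ _

theorem weakNorm_indicator_le (hp : 0 < p) {F : Finset Γ} {s : Γ → ℝ}
    (hs : ∀ γ ∈ F, |s γ| ≤ 1) :
    weakNorm p w ((F : Set Γ).indicator s) ≤ (∑ γ ∈ F, ENNReal.ofReal (w γ)) ^ (1 / p) := by
  have habs : ∀ γ, |(F : Set Γ).indicator s γ| ≤ 1 := fun γ => by
    by_cases hγ : γ ∈ F <;> simp [hγ, hs]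
  refine weakNorm_le_iff.2 fun c hc => ?_
  rcases lt_or_ge c 1 with hc1 | hc1
  · have hsub : {γ | c < |(F : Set Γ).indicator s γ|} ⊆ F := fun γ hγ =>
      Set.mem_of_indicator_ne_zero (abs_pos.1 (hc.trans hγ))
    calc ENNReal.ofReal c * levelWeight w ((F : Set Γ).indicator s) c ^ (1 / p)
        ≤ 1 * (∑' γ : (F : Set Γ), ENNReal.ofReal (w γ)) ^ (1 / p) := by
          gcongr
          · exact ENNReal.ofReal_le_one.2 hc1.le
          · exact ENNReal.tsum_mono_subtype (fun γ => ENNReal.ofReal (w γ)) hsub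
      _ = (∑ γ ∈ F, ENNReal.ofReal (w γ)) ^ (1 / p) := by
          rw [one_mul, Finset.tsum_subtype' F fun γ => ENNReal.ofReal (w γ)]
  · have hempty : levelWeight w ((F : Set Γ).indicator s) c = 0 :=
      ENNReal.tsum_eq_zero.2 fun γ => absurd γ.2 (not_lt.2 ((habs γ).trans hc1))
    rw [hempty, ENNReal.zero_rpow_of_pos (one_div_pos.2 hp), mul_zero]
    exact zero_le

theorem ofReal_half_mul_le_weakNorm_indicator_one (F : Finset Γ) :
    ENNReal.ofReal (1 / 2) * (∑ γ ∈ F, ENNReal.ofReal (w γ)) ^ (1 / p)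
      ≤ weakNorm p w ((F : Set Γ).indicator (1 : Γ → ℝ)) := by
  have hlevel : {γ | 1 / 2 < |(F : Set Γ).indicator (1 : Γ → ℝ) γ|} = F := by
    ext γ
    by_cases hγ : γ ∈ F <;> norm_num [hγ]
  refine le_of_eq_of_le ?_ (ofReal_mul_levelWeight_rpow_le_weakNorm _ one_half_pos)
  rw [levelWeight, tsum_congr_set_coe (fun γ => ENNReal.ofReal (w γ)) hlevel,
    Finset.tsum_subtype' F fun γ => ENNReal.ofReal (w γ)]

theorem weakNorm_indicator_le_mul_card_rpow (hp : 0 < p) {F : Finset Γ} {s : Γ → ℝ}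
    (hs : ∀ γ ∈ F, |s γ| ≤ 1) {b : ℝ} (hb : ∀ γ ∈ F, w γ ≤ b) :
    weakNorm p w ((F : Set Γ).indicator s)
      ≤ ENNReal.ofReal b ^ (1 / p) * (#F : ℝ≥0∞) ^ (1 / p) := by
  refine (weakNorm_indicator_le hp hs).trans ?_
  rw [← ENNReal.mul_rpow_of_nonneg _ _ (one_div_pos.2 hp).le]
  gcongr
  simpa [mul_comm] using
    Finset.sum_le_card_nsmul F _ _ fun γ hγ => ENNReal.ofReal_le_ofReal (hb γ hγ)

theorem ofReal_half_mul_card_rpow_le_weakNorm_indicator_one (hp : 0 < p) {F : Finset Γ} {a : ℝ}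
    (ha : ∀ γ ∈ F, a ≤ w γ) :
    ENNReal.ofReal (1 / 2) * (ENNReal.ofReal a ^ (1 / p) * (#F : ℝ≥0∞) ^ (1 / p))
      ≤ weakNorm p w ((F : Set Γ).indicator (1 : Γ → ℝ)) := by
  refine le_trans ?_ (ofReal_half_mul_le_weakNorm_indicator_one F)
  rw [← ENNReal.mul_rpow_of_nonneg _ _ (one_div_pos.2 hp).le]
  gcongr
  simpa [mul_comm] using
    Finset.card_nsmul_le_sum F _ _ fun γ hγ => ENNReal.ofReal_le_ofReal (ha γ hγ)

theorem finite_setOf_lt_abs_apply {ι : Type*} {r : ℝ} (hp : 0 < p) (hr : 1 < r)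
    (hw : ∀ γ, 0 < w γ) {A : Set ι} {f : ι → Γ → ℝ} {M : ℝ≥0∞} (hM : M ≠ ⊤)
    (hup : ∀ (F : Finset ι) (s : ι → ℝ), ↑F ⊆ A → (∀ i ∈ F, |s i| ≤ 1) →
      weakNorm p w (∑ i ∈ F, s i • f i) ≤ M * (#F : ℝ≥0∞) ^ (1 / r))
    (t : Γ) {κ : ℝ} (hκ : 0 < κ) : {i ∈ A | κ < |f i t|}.Finite := by
  by_contra hinf
  set K := ENNReal.ofReal κ * ENNReal.ofReal (w t) ^ (1 / p)
  have hK : K ≠ 0 := mul_ne_zero (ENNReal.ofReal_pos.2 hκ).ne'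
    (ENNReal.rpow_pos (ENNReal.ofReal_pos.2 (hw t)) ENNReal.ofReal_ne_top).ne'
  obtain ⟨N, hN0, hN⟩ := exists_nat_mul_rpow_lt (u := 1) hK hM ((div_lt_one (by linarith)).2 hr)
  obtain ⟨F, hFA, rfl⟩ := Set.Infinite.exists_subset_card_eq hinf N
  set s : ι → ℝ := fun i => SignType.sign (f i t)
  have hs : ∀ i ∈ F, |s i| ≤ 1 := fun i _ => by
    rcases lt_trichotomy (f i t) 0 with h | h | h <;> simp [s, h]
  have hsum : #F * κ < (∑ i ∈ F, s i • f i) t :=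
    calc #F * κ = ∑ i ∈ F, κ := by simp
      _ < ∑ i ∈ F, |f i t| :=
        Finset.sum_lt_sum_of_nonempty (card_pos.1 hN0) fun i hi => (hFA hi).2
      _ = (∑ i ∈ F, s i • f i) t := by simp [s, Finset.sum_apply]
  refine hN.not_ge ?_
  calc K * (#F : ℝ≥0∞) ^ (1 : ℝ)
      = ENNReal.ofReal (#F * κ) * ENNReal.ofReal (w t) ^ (1 / p) := by
        rw [ENNReal.rpow_one, ENNReal.ofReal_mul (Nat.cast_nonneg _), ENNReal.ofReal_natCast]
        ring
    _ ≤ weakNorm p w (∑ i ∈ F, s i • f i) :=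
        ofReal_mul_rpow_le_weakNorm hp (by positivity) (hsum.trans_le (le_abs_self _))
    _ ≤ M * (#F : ℝ≥0∞) ^ (1 / r) := hup F s (fun i hi => (hFA hi).1) hs

theorem countable_of_weakNorm_rpow_estimates {ι : Type*} {r : ℝ} (hr : 1 < r) (hrp : r < p)
    (hw : ∀ γ, 0 < w γ) {A : Set ι} {f : ι → Γ → ℝ} {ε M : ℝ≥0∞} (hε : ε ≠ 0) (hM : M ≠ ⊤)
    (hlow : ∀ F : Finset ι, ↑F ⊆ A → ε * (#F : ℝ≥0∞) ^ (1 / r) ≤ weakNorm p w (∑ i ∈ F, f i))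
    (hup : ∀ (F : Finset ι) (s : ι → ℝ), ↑F ⊆ A → (∀ i ∈ F, |s i| ≤ 1) →
      weakNorm p w (∑ i ∈ F, s i • f i) ≤ M * (#F : ℝ≥0∞) ^ (1 / r)) :
    A.Countable := by
  by_contra hA
  have hp : 0 < p := by linarith
  have hf : ∀ i ∈ A, weakNorm p w (f i) ≤ M := fun i hi => by
    simpa using hup {i} 1 (by simpa using hi) (by simp)
  have hfib : ∀ t, {i ∈ A | t ∈ support (f i)}.Countable := fun t =>
    countable_setOf_ne_zero_of_forall_countable (g := fun i => f i t) fun κ hκ =>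
      (finite_setOf_lt_abs_apply hp hr hw hM hup t hκ).countable
  have hsupp : ∀ i ∈ A, (support (f i)).Countable := fun i hi =>
    countable_support_of_weakNorm_ne_top hp hw (ne_top_of_le_ne_top hM (hf i hi))
  obtain ⟨N, -, hN⟩ := exists_nat_mul_rpow_lt hε hM (one_div_lt_one_div_of_lt (by linarith) hrp)
  obtain ⟨F, hFA, rfl, hF⟩ := exists_finset_card_eq_pairwise_disjoint hA hsupp hfib N
  exact hN.not_ge ((hlow F hFA).trans
    (weakNorm_sum_le_of_pairwise_disjoint hp hF fun i hi => hf i (hFA hi)))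

end WeakNorm

theorem exists_not_countable_preimage_Ioc {Γ : Type*} [Uncountable Γ] {w : Γ → ℝ}
    (hw : ∀ γ, 0 < w γ) : ∃ d : ℝ, 0 < d ∧ ¬ (w ⁻¹' Set.Ioc d (2 * d)).Countable := by
  by_contra! h
  refine Set.not_countable_univ ((Set.countable_iUnion fun n : ℤ =>
    h (2 ^ n) (zpow_pos two_pos n)).mono fun γ _ => Set.mem_iUnion.2 ?_)
  obtain ⟨n, hn⟩ := exists_mem_Ioc_zpow (hw γ) one_lt_two
  rw [zpow_add_one₀ two_ne_zero, mul_comm] at hn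
  exact ⟨n, hn⟩

theorem not_exists_weakNorm_embedding {Γ : Type*} {p r : ℝ} (hr : 1 < r) (hrp : r < p)
    {w₁ w₂ : Γ → ℝ} (hw₁ : ∀ γ, 0 < w₁ γ) {A : Set Γ} (hA : ¬ A.Countable) {a b : ℝ}
    (ha : 0 < a) (hab : Set.MapsTo w₂ A (Set.Icc a b)) :
    ¬ ∃ (T : (Γ → ℝ) →ₗ[ℝ] (Γ → ℝ)) (ε M : ℝ≥0∞), 0 < ε ∧ M ≠ ⊤ ∧
      ∀ x : Γ → ℝ, weakNorm r w₂ x ≠ ⊤ →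
        ε * weakNorm r w₂ x ≤ weakNorm p w₁ (T x) ∧
        weakNorm p w₁ (T x) ≤ M * weakNorm r w₂ x := by
  classical
  rintro ⟨T, ε, M, hε, hM, hT⟩
  have hr0 : 0 < r := by linarith
  have hfin : ∀ (F : Finset Γ) (s : Γ → ℝ), ↑F ⊆ A → (∀ γ ∈ F, |s γ| ≤ 1) →
      weakNorm r w₂ ((F : Set Γ).indicator s) ≠ ⊤ := fun F s hFA hs =>
    ne_top_of_le_ne_top (by finiteness)
      (weakNorm_indicator_le_mul_card_rpow hr0 hs fun γ hγ => (hab (hFA hγ)).2)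
  refine hA (countable_of_weakNorm_rpow_estimates hr hrp hw₁ (f := fun γ => T (Pi.single γ 1))
    (ε := ε * (ENNReal.ofReal (1 / 2) * ENNReal.ofReal a ^ (1 / r)))
    (M := M * ENNReal.ofReal b ^ (1 / r)) ?_ (by finiteness) ?_ ?_)
  · exact mul_ne_zero hε.ne' (mul_ne_zero (by norm_num)
      (ENNReal.rpow_pos (ENNReal.ofReal_pos.2 ha) ENNReal.ofReal_ne_top).ne')
  · intro F hFA
    calc ε * (ENNReal.ofReal (1 / 2) * ENNReal.ofReal a ^ (1 / r)) * (#F : ℝ≥0∞) ^ (1 / r)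
        = ε * (ENNReal.ofReal (1 / 2) * (ENNReal.ofReal a ^ (1 / r) * (#F : ℝ≥0∞) ^ (1 / r))) := by
          ring
      _ ≤ ε * weakNorm r w₂ ((F : Set Γ).indicator (1 : Γ → ℝ)) := by
          gcongr
          exact ofReal_half_mul_card_rpow_le_weakNorm_indicator_one hr0 fun γ hγ => (hab (hFA hγ)).1
      _ ≤ weakNorm p w₁ (T ((F : Set Γ).indicator (1 : Γ → ℝ))) :=
          (hT _ (hfin F 1 hFA (by simp))).1
      _ = weakNorm p w₁ (∑ γ ∈ F, T (Pi.single γ 1)) := by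
          simp [LinearMap.apply_indicator_eq_sum_smul]
  · intro F s hFA hs
    calc weakNorm p w₁ (∑ γ ∈ F, s γ • T (Pi.single γ 1))
        = weakNorm p w₁ (T ((F : Set Γ).indicator s)) := by
          rw [LinearMap.apply_indicator_eq_sum_smul]
      _ ≤ M * weakNorm r w₂ ((F : Set Γ).indicator s) := (hT _ (hfin F s hFA hs)).2
      _ ≤ M * (ENNReal.ofReal b ^ (1 / r) * (#F : ℝ≥0∞) ^ (1 / r)) := by
          gcongr
          exact weakNorm_indicator_le_mul_card_rpow hr0 hs fun γ hγ => (hab (hFA hγ)).2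
      _ = M * ENNReal.ofReal b ^ (1 / r) * (#F : ℝ≥0∞) ^ (1 / r) := by ring

/-- If `Γ` is uncountable and `1 < r < p < ∞`, then the counting-measure weak `ℓ^r` space on
`Γ` does not embed isomorphically into `ℓ^{p,∞}(Γ,w₁)` for any weight `w₁`; hence
`ℓ^{p,∞}(Γ,w₁)` and `ℓ^{r,∞}(Γ,w₂)` are never isomorphic. -/
theorem no_embedding_of_exponent_lt {Γ : Type*} (p r : ℝ) (hr : 1 < r) (hrp : r < p)
    (hΓ : Cardinal.aleph0 < Cardinal.mk Γ) (w₁ : Γ → ℝ) (hw₁ : ∀ γ, 0 < w₁ γ) :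
    (¬ ∃ (T : (Γ → ℝ) →ₗ[ℝ] (Γ → ℝ)) (ε M : ℝ≥0∞), 0 < ε ∧ M ≠ ⊤ ∧
      ∀ x : Γ → ℝ, weakNorm r (fun _ => 1) x ≠ ⊤ →
        ε * weakNorm r (fun _ => 1) x ≤ weakNorm p w₁ (T x) ∧
        weakNorm p w₁ (T x) ≤ M * weakNorm r (fun _ => 1) x) ∧
    ∀ w₂ : Γ → ℝ, (∀ γ, 0 < w₂ γ) →
      ¬ ∃ (T : (Γ → ℝ) →ₗ[ℝ] (Γ → ℝ)) (ε M : ℝ≥0∞), 0 < ε ∧ M ≠ ⊤ ∧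
        (∀ x : Γ → ℝ, weakNorm r w₂ x ≠ ⊤ →
          ε * weakNorm r w₂ x ≤ weakNorm p w₁ (T x) ∧
          weakNorm p w₁ (T x) ≤ M * weakNorm r w₂ x) ∧
        (∀ y : Γ → ℝ, weakNorm p w₁ y ≠ ⊤ →
          ∃ x : Γ → ℝ, weakNorm r w₂ x ≠ ⊤ ∧ T x = y) := by
  have : Uncountable Γ := Cardinal.aleph0_lt_mk_iff.1 hΓ
  refine ⟨not_exists_weakNorm_embedding hr hrp hw₁ Set.not_countable_univ one_pos
    fun _ _ => Set.left_mem_Icc.2 le_rfl, fun w₂ hw₂ ⟨T, ε, M, hε, hM, hT, _⟩ => ?_⟩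
  obtain ⟨d, hd, hA⟩ := exists_not_countable_preimage_Ioc hw₂
  exact not_exists_weakNorm_embedding hr hrp hw₁ hA hd
    ((Set.mapsTo_preimage w₂ _).mono_right Set.Ioc_subset_Icc_self)
    ⟨T, ε, M, hε, hM, hT⟩
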